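/- arXiv:2312.09892 — 2 statements merged into one kernel-verified Lean document; each statement's English description precedes it below -/
import Mathlib

section
/- Let a, b, c be real numbers with a > 0. Every complex root w of the quadratic polynomial a w² + b w + c has strictly negative real part if and only if b > 0 and c > 0. -/
/-!
Over `ℂ` the quadratic factors as `a (w - r) (w - s)` with `a (r + s) = -b` and `a r s = c`, so the
claim is that both roots lie in the open left half-plane iff `r + s` has negative real part and
`r s` is positive. Since `r + s` and `r s` are real, either both roots are real, and then their
signs are read off from their sum and product, or `s = r̄`, and then `r + s = 2 Re r` and
`r s = |r|² > 0`.
-/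

open Polynomial

theorem exists_vieta_pair {K : Type*} [Field K] [IsAlgClosed K] {a : K} (ha : a ≠ 0) (b c : K) :
    ∃ r s : K, a * (r + s) = -b ∧ a * (r * s) = c := by
  obtain ⟨r, hr⟩ := IsAlgClosed.exists_root (C a * X ^ 2 + C b * X + C c)
    (by rw [degree_quadratic ha]; decide)
  have hroot : a * r ^ 2 + b * r + c = 0 := by simpa using hr
  refine ⟨r, -b / a - r, ?_, ?_⟩
  · field_simp
    ring
  · field_simp
    linear_combination -hroot

theorem Complex.re_neg_and_re_neg_iff {r s : ℂ} (hsum : (r + s).im = 0) (hprod : (r * s).im = 0) :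
    r.re < 0 ∧ s.re < 0 ↔ (r + s).re < 0 ∧ 0 < (r * s).re := by
  simp only [add_re, add_im, mul_re, mul_im] at hsum hprod ⊢
  have him : s.im = -r.im := by linarith
  rw [him] at hprod ⊢
  have hconj : r.im * (s.re - r.re) = 0 := by linarith
  constructor
  · rintro ⟨hr, hs⟩
    exact ⟨by linarith, by nlinarith [sq_nonneg r.im]⟩
  · rintro ⟨hneg, hpos⟩
    rcases mul_eq_zero.mp hconj with hreal | hconj
    · rw [hreal] at hpos
      constructor <;> nlinarith
    · constructor <;> linarith

/-- Routh–Hurwitz criterion for real quadratics: all complex roots of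
`a w² + b w + c` (with `a > 0`) have negative real part iff `b > 0` and `c > 0`. -/
theorem routh_hurwitz_quadratic (a b c : ℝ) (ha : 0 < a) :
    (∀ w : ℂ, (a : ℂ) * w ^ 2 + (b : ℂ) * w + (c : ℂ) = 0 → w.re < 0) ↔
      (0 < b ∧ 0 < c) := by
  have ha' : (a : ℂ) ≠ 0 := Complex.ofReal_ne_zero.mpr ha.ne'
  obtain ⟨r, s, hsum, hprod⟩ := exists_vieta_pair ha' b c
  have hroots : ∀ w : ℂ, (a : ℂ) * w ^ 2 + b * w + c = 0 ↔ w = r ∨ w = s := fun w => by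
    rw [show (a : ℂ) * w ^ 2 + b * w + c = a * ((w - r) * (w - s)) by
      linear_combination w * hsum - hprod]
    simp [ha', sub_eq_zero]
  have hsum' : r + s = ((-b / a : ℝ) : ℂ) := by
    push_cast
    field_simp
    linear_combination hsum
  have hprod' : r * s = ((c / a : ℝ) : ℂ) := by
    push_cast
    field_simp
    linear_combination hprod
  calc (∀ w : ℂ, (a : ℂ) * w ^ 2 + b * w + c = 0 → w.re < 0)
      ↔ r.re < 0 ∧ s.re < 0 := by simp only [hroots, or_imp, forall_and, forall_eq]
    _ ↔ (r + s).re < 0 ∧ 0 < (r * s).re :=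
        Complex.re_neg_and_re_neg_iff (by simp [hsum']) (by simp [hprod'])
    _ ↔ 0 < b ∧ 0 < c := by
        rw [hsum', hprod', Complex.ofReal_re, Complex.ofReal_re, neg_div, neg_lt_zero,
          div_pos_iff_of_pos_right ha, div_pos_iff_of_pos_right ha]
end

section
/- Let a₃, a₂, a₁, a₀ be real numbers with a₃ > 0. Every complex root w of the cubic polynomial a₃ w³ + a₂ w² + a₁ w + a₀ has strictly negative real part if and only if a₂ > 0, a₁ > 0, a₀ > 0, and a₂ a₁ > a₀ a₃. -/
/-!
A real cubic has a real root `r`, and then factors as `(w - r) (a₃ w² + p w + q)` with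
`p = a₂ + a₃ r`, `q = a₁ + a₂ r + a₃ r²`. Its roots lie in the open left half-plane iff `r < 0`
and `p, q > 0` (the quadratic case of the criterion). Since `a₂ = p - a₃ r`, `a₁ = q - p r`,
`a₀ = -q r` and `a₂ a₁ - a₀ a₃ = p (q - p r + a₃ r²)`, this is equivalent to the Hurwitz conditions.
-/

open Polynomial Filter

theorem Polynomial.exists_isRoot_of_odd_natDegree_real {P : ℝ[X]} (hP : Odd P.natDegree) :
    ∃ x, P.IsRoot x := by
  have hdeg : 0 < P.degree := natDegree_pos_iff_degree_pos.1 hP.pos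
  wlog hlc : 0 < P.leadingCoeff generalizing P
  · have hlc' : P.leadingCoeff < 0 :=
      (not_lt.1 hlc).lt_of_ne (leadingCoeff_ne_zero.2 (ne_zero_of_degree_gt hdeg))
    obtain ⟨x, hx⟩ := this (P := -P) (by rwa [natDegree_neg]) (by rwa [degree_neg])
      (by rwa [leadingCoeff_neg, neg_pos])
    exact ⟨x, by simpa using hx⟩
  have hbot : Tendsto (fun x => P.eval x) atBot atBot := by
    have hQ : 0 < (P.comp (-X)).degree := by
      rw [← natDegree_pos_iff_degree_pos, natDegree_comp]; simpa using hP.pos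
    have hlcQ : (P.comp (-X)).leadingCoeff ≤ 0 := by
      rw [leadingCoeff_comp (by simp)]
      simp [hP.neg_one_pow, hlc.le]
    simpa [Function.comp_def] using
      ((P.comp (-X)).tendsto_atBot_of_leadingCoeff_nonpos hQ hlcQ).comp tendsto_neg_atBot_atTop
  exact P.continuous.surjective (P.tendsto_atTop_of_leadingCoeff_nonneg hdeg hlc.le) hbot 0

theorem exists_cubic_eq_zero_real {a₃ : ℝ} (ha₃ : a₃ ≠ 0) (a₂ a₁ a₀ : ℝ) :
    ∃ r : ℝ, a₃ * r ^ 3 + a₂ * r ^ 2 + a₁ * r + a₀ = 0 := by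
  obtain ⟨r, hr⟩ := exists_isRoot_of_odd_natDegree_real
    (P := C a₃ * X ^ 3 + C a₂ * X ^ 2 + C a₁ * X + C a₀) (by rw [natDegree_cubic ha₃]; decide)
  exact ⟨r, by simpa using hr⟩

theorem quadratic_eq_zero_neg_div_sub {K : Type*} [Field K] {a b c z : K} (ha : a ≠ 0)
    (hz : a * z ^ 2 + b * z + c = 0) : a * (-b / a - z) ^ 2 + b * (-b / a - z) + c = 0 := by
  field_simp
  linear_combination a * hz

theorem exists_quadratic_eq_zero_re_nonneg {a b : ℝ} (ha : 0 < a) (hb : b ≤ 0) (c : ℝ) :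
    ∃ z : ℂ, (a : ℂ) * z ^ 2 + b * z + c = 0 ∧ 0 ≤ z.re := by
  have ha' : (a : ℂ) ≠ 0 := by exact_mod_cast ha.ne'
  obtain ⟨z, hz⟩ := exists_quadratic_eq_zero ha' (IsAlgClosed.exists_eq_mul_self _)
  rw [← sq] at hz
  have hsum : z.re + (-b / a - z : ℂ).re = -b / a := by
    simp [← Complex.ofReal_neg, ← Complex.ofReal_div]
  rcases le_total 0 z.re with h | h
  · exact ⟨z, hz, h⟩
  · refine ⟨_, quadratic_eq_zero_neg_div_sub ha' hz, ?_⟩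
    have : 0 ≤ -b / a := div_nonneg (neg_nonneg.2 hb) ha.le
    linarith

theorem exists_quadratic_eq_zero_nonneg {a c : ℝ} (ha : 0 < a) (b : ℝ) (hc : c ≤ 0) :
    ∃ x : ℝ, a * x ^ 2 + b * x + c = 0 ∧ 0 ≤ x := by
  have hD : 0 ≤ discrim a b c := by unfold discrim; nlinarith [sq_nonneg b]
  obtain ⟨x, hx⟩ := exists_quadratic_eq_zero ha.ne' ⟨_, (Real.mul_self_sqrt hD).symm⟩
  rw [← sq] at hx
  have hprod : x * (-b / a - x) = c / a := by
    field_simp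
    linear_combination -hx
  rcases le_or_gt 0 x with h | h
  · exact ⟨x, hx, h⟩
  · refine ⟨_, quadratic_eq_zero_neg_div_sub ha.ne' hx, ?_⟩
    have : c / a ≤ 0 := div_nonpos_of_nonpos_of_nonneg hc ha.le
    nlinarith

theorem re_neg_of_quadratic_eq_zero {a b c : ℝ} (ha : 0 < a) (hb : 0 < b) (hc : 0 < c) {z : ℂ}
    (hz : (a : ℂ) * z ^ 2 + b * z + c = 0) : z.re < 0 := by
  have hre : a * (z.re ^ 2 - z.im ^ 2) + b * z.re + c = 0 := by
    simpa [sq] using congrArg Complex.re hz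
  have him : (2 * a * z.re + b) * z.im = 0 := by
    have him' : a * (z.re * z.im + z.im * z.re) + b * z.im = 0 := by
      simpa [sq] using congrArg Complex.im hz
    linear_combination him'
  rcases mul_eq_zero.1 him with h | h
  · nlinarith
  · rw [h] at hre
    by_contra! hx
    nlinarith

theorem quadratic_roots_re_neg_iff {a b c : ℝ} (ha : 0 < a) :
    (∀ z : ℂ, (a : ℂ) * z ^ 2 + b * z + c = 0 → z.re < 0) ↔ 0 < b ∧ 0 < c := by
  refine ⟨fun h => ⟨?_, ?_⟩, fun ⟨hb, hc⟩ z => re_neg_of_quadratic_eq_zero ha hb hc⟩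
  · by_contra! hb
    obtain ⟨z, hz, hre⟩ := exists_quadratic_eq_zero_re_nonneg ha hb c
    exact (h z hz).not_ge hre
  · by_contra! hc
    obtain ⟨x, hx, hx0⟩ := exists_quadratic_eq_zero_nonneg ha b hc
    exact (h x (by exact_mod_cast hx)).not_ge (by simpa using hx0)

theorem cubic_eq_sub_mul_quadratic {R : Type*} [CommRing R] {a₃ a₂ a₁ a₀ r : R}
    (hr : a₃ * r ^ 3 + a₂ * r ^ 2 + a₁ * r + a₀ = 0) (w : R) :
    a₃ * w ^ 3 + a₂ * w ^ 2 + a₁ * w + a₀ =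
      (w - r) * (a₃ * w ^ 2 + (a₂ + a₃ * r) * w + (a₁ + a₂ * r + a₃ * r ^ 2)) := by
  linear_combination hr

theorem cubic_roots_re_neg_iff_of_root {a₃ a₂ a₁ a₀ r : ℝ}
    (hr : a₃ * r ^ 3 + a₂ * r ^ 2 + a₁ * r + a₀ = 0) :
    (∀ w : ℂ, (a₃ : ℂ) * w ^ 3 + (a₂ : ℂ) * w ^ 2 + (a₁ : ℂ) * w + (a₀ : ℂ) = 0 → w.re < 0) ↔
      r < 0 ∧ ∀ z : ℂ, (a₃ : ℂ) * z ^ 2 + ((a₂ + a₃ * r : ℝ) : ℂ) * z +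
        ((a₁ + a₂ * r + a₃ * r ^ 2 : ℝ) : ℂ) = 0 → z.re < 0 := by
  have hr' : (a₃ : ℂ) * (r : ℂ) ^ 3 + (a₂ : ℂ) * (r : ℂ) ^ 2 + (a₁ : ℂ) * r + (a₀ : ℂ) = 0 := by
    exact_mod_cast congrArg Complex.ofReal hr
  simp only [cubic_eq_sub_mul_quadratic hr', mul_eq_zero, sub_eq_zero, or_imp, forall_and,
    forall_eq, Complex.ofReal_re]
  push_cast
  rfl

theorem hurwitz_cubic_iff_of_root {a₃ a₂ a₁ a₀ r : ℝ} (ha₃ : 0 < a₃)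
    (hr : a₃ * r ^ 3 + a₂ * r ^ 2 + a₁ * r + a₀ = 0) :
    (r < 0 ∧ 0 < a₂ + a₃ * r ∧ 0 < a₁ + a₂ * r + a₃ * r ^ 2) ↔
      (0 < a₂ ∧ 0 < a₁ ∧ 0 < a₀ ∧ a₀ * a₃ < a₂ * a₁) := by
  set p := a₂ + a₃ * r
  set q := a₁ + a₂ * r + a₃ * r ^ 2
  have ha₂ : a₂ = p - a₃ * r := by ring
  have ha₁ : a₁ = q - p * r := by ring
  have ha₀ : a₀ = -q * r := by linear_combination hr
  have hdet : a₂ * a₁ - a₀ * a₃ = p * (q - p * r + a₃ * r ^ 2) := by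
    rw [ha₂, ha₁, ha₀]; ring
  constructor
  · rintro ⟨hr0, hp, hq⟩
    have hpr : 0 < -(p * r) := by nlinarith
    refine ⟨by nlinarith, by nlinarith, by nlinarith, ?_⟩
    nlinarith [mul_pos hp (by nlinarith : 0 < q - p * r + a₃ * r ^ 2)]
  · rintro ⟨h₂, h₁, h₀, hdisc⟩
    have hr0 : r < 0 := by
      by_contra! hr0
      nlinarith [mul_nonneg (mul_nonneg ha₃.le hr0) (sq_nonneg r), mul_nonneg h₂.le (sq_nonneg r)]
    have hq : 0 < q := by nlinarith
    refine ⟨hr0, ?_, hq⟩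
    by_contra! hp
    nlinarith [mul_nonpos_of_nonpos_of_nonneg hp (by nlinarith : 0 ≤ q - p * r + a₃ * r ^ 2)]

/-- Routh–Hurwitz criterion for real cubics: all complex roots of
`a₃ w³ + a₂ w² + a₁ w + a₀` (with `a₃ > 0`) have negative real part iff
`a₂ > 0`, `a₁ > 0`, `a₀ > 0` and `a₂ a₁ > a₀ a₃`. -/
theorem routh_hurwitz_cubic (a₃ a₂ a₁ a₀ : ℝ) (ha₃ : 0 < a₃) :
    (∀ w : ℂ, (a₃ : ℂ) * w ^ 3 + (a₂ : ℂ) * w ^ 2 + (a₁ : ℂ) * w + (a₀ : ℂ) = 0 →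
        w.re < 0) ↔
      (0 < a₂ ∧ 0 < a₁ ∧ 0 < a₀ ∧ a₀ * a₃ < a₂ * a₁) := by
  obtain ⟨r, hr⟩ := exists_cubic_eq_zero_real ha₃.ne' a₂ a₁ a₀
  rw [cubic_roots_re_neg_iff_of_root hr, quadratic_roots_re_neg_iff ha₃,
    hurwitz_cubic_iff_of_root ha₃ hr]
end
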